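/- Let V : Δ_{d,d} → R_{>0} satisfy the Aleksandrov-Fenchel inequalities V(p)^2 ≥ V(p+e_i-e_j)·V(p-e_i+e_j) and the square inequalities V(p)·V(p+u_1+u_2) ≤ 2·V(p+u_1)·V(p+u_2) (for u_1 = e_{i_1}-e_j, u_2 = e_{i_2}-e_j, i_1,i_2,j pairwise distinct, p_j ≥ 2), whenever all evaluation points lie in Δ_{d,d}. Then for every I ⊂ [d], j ∉ I, and p with p + u_{I,j}, p - u_{I,j} ∈ Δ_{d,d}, one has V(p + u_{I,j})^{1/2} · V(p - u_{I,j})^{1/2} ≤ 2^{binom(|I|,2)} · V(p), where u_{I,j} = Σ_{i∈I}(e_i - e_j). -/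
import Mathlib


/-- Membership in `Δ_{d,d} = {p ∈ Z^d : p ≥ 0, Σ p_i = d}`. -/
def inDelta (d : ℕ) (p : Fin d → ℤ) : Prop :=
  (∀ i, 0 ≤ p i) ∧ ∑ i, p i = d

/-- The standard basis vector `e_i`. -/
def ev (d : ℕ) (i : Fin d) : Fin d → ℤ := fun k => if k = i then 1 else 0

/-- The direction `u_{i,j} = e_i - e_j`. -/
def uu (d : ℕ) (i j : Fin d) : Fin d → ℤ := ev d i - ev d j

/-- The direction `u_{I,j} = Σ_{k∈I} (e_k - e_j)`. -/
def uI (d : ℕ) (I : Finset (Fin d)) (j : Fin d) : Fin d → ℤ :=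
  ∑ k ∈ I, (ev d k - ev d j)

lemma uI_apply (d : ℕ) (S : Finset (Fin d)) (j m : Fin d) :
    uI d S j m = (if m ∈ S then 1 else 0) - (if m = j then (S.card : ℤ) else 0) := by
  unfold uI ev
  rw [Finset.sum_apply]
  simp only [Pi.sub_apply]
  rw [Finset.sum_sub_distrib]
  congr 1
  · simp [Finset.sum_ite_eq S m (fun _ => (1:ℤ))]
  · split <;> simp [Finset.sum_const]

lemma uI_empty (d : ℕ) (j : Fin d) : uI d ∅ j = 0 := by simp [uI]

lemma uI_insert (d : ℕ) (S : Finset (Fin d)) (i j : Fin d) (h : i ∉ S) :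
    uI d (insert i S) j = uI d S j + uu d i j := by
  unfold uI uu
  rw [Finset.sum_insert h]; ring

lemma uI_singleton (d : ℕ) (i j : Fin d) : uI d {i} j = uu d i j := by
  simp [uI, uu]

lemma uI_sum (d : ℕ) (S : Finset (Fin d)) (j : Fin d) :
    ∑ m, uI d S j m = 0 := by
  simp only [uI_apply]
  rw [Finset.sum_sub_distrib]
  simp [Finset.sum_ite_eq', Finset.sum_ite_eq]

section
variable {d : ℕ} {I : Finset (Fin d)} {j : Fin d} {p : Fin d → ℤ}

lemma base_facts (hjI : j ∉ I)
    (hp1 : inDelta d (p + uI d I j)) (hp2 : inDelta d (p - uI d I j)) :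
    ((I.card : ℤ) ≤ p j) ∧ (∀ i ∈ I, 1 ≤ p i) ∧ (∀ m, 0 ≤ p m) ∧ (∑ m, p m = d) := by
  obtain ⟨h1, h1s⟩ := hp1
  obtain ⟨h2, _⟩ := hp2
  have hj := h1 j
  rw [Pi.add_apply, uI_apply] at hj
  simp [hjI] at hj
  refine ⟨by linarith, ?_, ?_, ?_⟩
  · intro i hi
    have := h2 i
    rw [Pi.sub_apply, uI_apply] at this
    have hij : i ≠ j := fun h => hjI (h ▸ hi)
    simp [hi, hij] at this
    linarith
  · intro m
    by_cases hm : m = j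
    · subst hm; linarith [Int.ofNat_nonneg I.card]
    · by_cases hmI : m ∈ I
      · have := h2 m
        rw [Pi.sub_apply, uI_apply] at this
        simp [hmI, hm] at this
        linarith
      · have := h1 m
        rw [Pi.add_apply, uI_apply] at this
        simp [hmI, hm] at this
        linarith
  · simp only [Pi.add_apply] at h1s
    rw [Finset.sum_add_distrib, uI_sum] at h1s
    simpa using h1s

lemma mem_delta (hjI : j ∉ I)
    (hp1 : inDelta d (p + uI d I j)) (hp2 : inDelta d (p - uI d I j))
    {S : Finset (Fin d)} (hS : S ⊆ I) :
    inDelta d (p + uI d S j) ∧ inDelta d (p - uI d S j) := by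
  obtain ⟨hpj, hpi, hpm, hsum⟩ := base_facts hjI hp1 hp2
  have hjS : j ∉ S := fun h => hjI (hS h)
  have hcard : (S.card : ℤ) ≤ I.card := by exact_mod_cast Finset.card_le_card hS
  constructor
  · refine ⟨?_, ?_⟩
    · intro m
      rw [Pi.add_apply, uI_apply]
      by_cases hm : m = j
      · subst hm; simp [hjS]; linarith
      · by_cases hmS : m ∈ S
        · simp [hmS, hm]; linarith [hpi m (hS hmS)]
        · simp [hmS, hm]; exact hpm m
    · simp only [Pi.add_apply]
      rw [Finset.sum_add_distrib, uI_sum, hsum]; ring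
  · refine ⟨?_, ?_⟩
    · intro m
      rw [Pi.sub_apply, uI_apply]
      by_cases hm : m = j
      · subst hm; simp [hjS]; linarith [hpm m, Int.ofNat_nonneg S.card]
      · by_cases hmS : m ∈ S
        · simp [hmS, hm]; linarith [hpi m (hS hmS)]
        · simp [hmS, hm]; exact hpm m
    · simp only [Pi.sub_apply]
      rw [Finset.sum_sub_distrib, uI_sum, hsum]; ring

end

theorem stmt_13 (d : ℕ) (V : (Fin d → ℤ) → ℝ)
    (hpos : ∀ p, inDelta d p → 0 < V p)
    (hAF : ∀ (p : Fin d → ℤ) (i j : Fin d), i ≠ j →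
      inDelta d p → inDelta d (p + uu d i j) → inDelta d (p - uu d i j) →
      V (p + uu d i j) * V (p - uu d i j) ≤ V p ^ 2)
    (hsq : ∀ (p : Fin d → ℤ) (i₁ i₂ j : Fin d), i₁ ≠ i₂ → i₁ ≠ j → i₂ ≠ j →
      inDelta d p → 2 ≤ p j →
      V p * V (p + uu d i₁ j + uu d i₂ j) ≤ 2 * V (p + uu d i₁ j) * V (p + uu d i₂ j))
    (I : Finset (Fin d)) (j : Fin d) (hjI : j ∉ I) (p : Fin d → ℤ)
    (hp1 : inDelta d (p + uI d I j)) (hp2 : inDelta d (p - uI d I j)) :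
    Real.sqrt (V (p + uI d I j)) * Real.sqrt (V (p - uI d I j)) ≤
      2 ^ (I.card.choose 2) * V p := by
  obtain ⟨hpj, hpi, hpm, hsum⟩ := base_facts hjI hp1 hp2
  have hpd : inDelta d p := ⟨hpm, hsum⟩
  have memP : ∀ S : Finset (Fin d), S ⊆ I → inDelta d (p + uI d S j) :=
    fun S hS => (mem_delta hjI hp1 hp2 hS).1
  have memM : ∀ S : Finset (Fin d), S ⊆ I → inDelta d (p - uI d S j) :=
    fun S hS => (mem_delta hjI hp1 hp2 hS).2
  have pos0 : 0 < V p := hpos p hpd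
  -- Lemma A (forward)
  have A : ∀ S : Finset (Fin d), S ⊆ I → ∀ i ∈ I, i ∉ S →
      V p * V (p + uI d S j + uu d i j) ≤
        2 ^ S.card * (V (p + uI d S j) * V (p + uu d i j)) := by
    intro S
    induction S using Finset.induction_on with
    | empty =>
      intro _ i hiI _
      simp [uI_empty]
    | @insert m T hmT ih =>
      intro hSI i hiI hiS
      have hmI : m ∈ I := hSI (Finset.mem_insert_self m T)
      have hTI : T ⊆ I := fun x hx => hSI (Finset.mem_insert_of_mem hx)
      have him : i ≠ m := fun h => hiS (h ▸ Finset.mem_insert_self m T)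
      have hiT : i ∉ T := fun h => hiS (Finset.mem_insert_of_mem h)
      have hmj : m ≠ j := fun h => hjI (h ▸ hmI)
      have hij : i ≠ j := fun h => hjI (h ▸ hiI)
      have hsub : insert i (insert m T) ⊆ I := by
        intro x hx
        rcases Finset.mem_insert.mp hx with h | h
        · exact h ▸ hiI
        · exact hSI h
      have hcard2 : T.card + 2 ≤ I.card := by
        have h := Finset.card_le_card hsub
        rwa [Finset.card_insert_of_notMem hiS, Finset.card_insert_of_notMem hmT] at h
      have hjT : j ∉ T := fun h => hjI (hTI h)
      have hqj : 2 ≤ (p + uI d T j) j := by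
        rw [Pi.add_apply, uI_apply]
        have : (T.card : ℤ) + 2 ≤ I.card := by exact_mod_cast hcard2
        simp [hjT]
        linarith
      have hsq' := hsq (p + uI d T j) m i j him.symm hmj hij (memP T hTI) hqj
      have U : uI d (insert m T) j = uI d T j + uu d m j := uI_insert d T m j hmT
      have E1 : p + uI d (insert m T) j = p + uI d T j + uu d m j := by rw [U]; abel
      have E2 : p + uI d (insert m T) j + uu d i j = p + uI d T j + uu d m j + uu d i j := by
        rw [E1]
      have E3 : p + uI d (insert i T) j = p + uI d T j + uu d i j := by
        rw [uI_insert d T i j hiT]; abel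
      have E4 : p + uI d (insert i (insert m T)) j = p + uI d T j + uu d m j + uu d i j := by
        rw [uI_insert d (insert m T) i j hiS, U]; abel
      have posq' : 0 < V (p + uI d T j) := hpos _ (memP T hTI)
      have posc : 0 < V (p + uI d T j + uu d m j) := by
        rw [← E1]; exact hpos _ (memP _ hSI)
      have hiTsub : insert i T ⊆ I := by
        intro x hx
        rcases Finset.mem_insert.mp hx with h | h
        · exact h ▸ hiI
        · exact hTI h
      have posr : 0 < V (p + uI d T j + uu d i j) := by
        rw [← E3]
        exact hpos _ (memP _ hiTsub)
      have pose : 0 < V (p + uu d i j) := by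
        rw [← uI_singleton d i j]
        exact hpos _ (memP {i} (by simpa using hiI))
      rw [E2, E1, Finset.card_insert_of_notMem hmT]
      have key : (V p * V (p + uI d T j + uu d m j + uu d i j)) * V (p + uI d T j) ≤
          (2 ^ (T.card + 1) * (V (p + uI d T j + uu d m j) * V (p + uu d i j))) *
            V (p + uI d T j) := by
        calc (V p * V (p + uI d T j + uu d m j + uu d i j)) * V (p + uI d T j)
            = V p * (V (p + uI d T j) * V (p + uI d T j + uu d m j + uu d i j)) := by ring
          _ ≤ V p * (2 * V (p + uI d T j + uu d m j) * V (p + uI d T j + uu d i j)) :=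
              mul_le_mul_of_nonneg_left hsq' pos0.le
          _ = (2 * V (p + uI d T j + uu d m j)) * (V p * V (p + uI d T j + uu d i j)) := by
              ring
          _ ≤ (2 * V (p + uI d T j + uu d m j)) *
                (2 ^ T.card * (V (p + uI d T j) * V (p + uu d i j))) :=
              mul_le_mul_of_nonneg_left (ih hTI i hiI hiT) (by positivity)
          _ = (2 ^ (T.card + 1) * (V (p + uI d T j + uu d m j) * V (p + uu d i j))) *
                V (p + uI d T j) := by ring
      exact le_of_mul_le_mul_right key posq'
  -- Lemma A' (backward)
  have A' : ∀ S : Finset (Fin d), S ⊆ I → ∀ i ∈ I, i ∉ S →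
      V p * V (p - uI d S j - uu d i j) ≤
        2 ^ S.card * (V (p - uI d S j) * V (p - uu d i j)) := by
    intro S
    induction S using Finset.induction_on with
    | empty =>
      intro _ i hiI _
      simp [uI_empty]
    | @insert m T hmT ih =>
      intro hSI i hiI hiS
      have hmI : m ∈ I := hSI (Finset.mem_insert_self m T)
      have hTI : T ⊆ I := fun x hx => hSI (Finset.mem_insert_of_mem hx)
      have him : i ≠ m := fun h => hiS (h ▸ Finset.mem_insert_self m T)
      have hiT : i ∉ T := fun h => hiS (Finset.mem_insert_of_mem h)
      have hmj : m ≠ j := fun h => hjI (h ▸ hmI)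
      have hij : i ≠ j := fun h => hjI (h ▸ hiI)
      have hsub : insert i (insert m T) ⊆ I := by
        intro x hx
        rcases Finset.mem_insert.mp hx with h | h
        · exact h ▸ hiI
        · exact hSI h
      have hiTsub : insert i T ⊆ I := by
        intro x hx
        rcases Finset.mem_insert.mp hx with h | h
        · exact h ▸ hiI
        · exact hTI h
      have U : uI d (insert m T) j = uI d T j + uu d m j := uI_insert d T m j hmT
      have U2 : uI d (insert i (insert m T)) j = uI d T j + uu d m j + uu d i j := by
        rw [uI_insert d (insert m T) i j hiS, U]
      set q : Fin d → ℤ := p - uI d (insert i (insert m T)) j with hq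
      have hqmem : inDelta d q := memM _ hsub
      have hjS2 : j ∉ insert i (insert m T) := by
        simp only [Finset.mem_insert]
        push_neg
        exact ⟨fun h => hjI (h ▸ hiI), fun h => hjI (h ▸ hmI), fun h => hjI (hTI h)⟩
      have hqj : 2 ≤ q j := by
        rw [hq, Pi.sub_apply, uI_apply]
        have hc : (insert i (insert m T)).card = T.card + 2 := by
          rw [Finset.card_insert_of_notMem hiS, Finset.card_insert_of_notMem hmT]
        simp [hjS2, hc]
        linarith [hpm j]
      have hsq' := hsq q m i j him.symm hmj hij hqmem hqj
      have F0 : p - uI d (insert m T) j - uu d i j = q := by rw [hq, U2, U]; abel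
      have F1 : q + uu d m j + uu d i j = p - uI d T j := by rw [hq, U2]; abel
      have F2 : q + uu d m j = p - uI d T j - uu d i j := by rw [hq, U2]; abel
      have F3 : q + uu d i j = p - uI d (insert m T) j := by rw [hq, U2, U]; abel
      rw [F1, F2, F3] at hsq'
      have posq' : 0 < V (p - uI d T j) := hpos _ (memM T hTI)
      have posc : 0 < V (p - uI d (insert m T) j) := hpos _ (memM _ hSI)
      have posr : 0 < V (p - uI d T j - uu d i j) := by
        have E3 : p - uI d (insert i T) j = p - uI d T j - uu d i j := by
          rw [uI_insert d T i j hiT]; abel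
        rw [← E3]; exact hpos _ (memM _ hiTsub)
      have pose : 0 < V (p - uu d i j) := by
        rw [← uI_singleton d i j]
        exact hpos _ (memM {i} (by simpa using hiI))
      rw [F0, Finset.card_insert_of_notMem hmT]
      have key : (V p * V q) * V (p - uI d T j) ≤
          (2 ^ (T.card + 1) * (V (p - uI d (insert m T) j) * V (p - uu d i j))) *
            V (p - uI d T j) := by
        calc (V p * V q) * V (p - uI d T j)
            = V p * (V q * V (p - uI d T j)) := by ring
          _ ≤ V p * (2 * V (p - uI d T j - uu d i j) * V (p - uI d (insert m T) j)) :=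
              mul_le_mul_of_nonneg_left hsq' pos0.le
          _ = (2 * V (p - uI d (insert m T) j)) * (V p * V (p - uI d T j - uu d i j)) := by
              ring
          _ ≤ (2 * V (p - uI d (insert m T) j)) *
                (2 ^ T.card * (V (p - uI d T j) * V (p - uu d i j))) :=
              mul_le_mul_of_nonneg_left (ih hTI i hiI hiT) (by positivity)
          _ = (2 ^ (T.card + 1) * (V (p - uI d (insert m T) j) * V (p - uu d i j))) *
                V (p - uI d T j) := by ring
      exact le_of_mul_le_mul_right key posq'
  -- Lemma B (forward product)
  have B : ∀ S : Finset (Fin d), S ⊆ I →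
      V p ^ S.card * V (p + uI d S j) ≤
        2 ^ (S.card.choose 2) * (V p * ∏ i ∈ S, V (p + uu d i j)) := by
    intro S
    induction S using Finset.induction_on with
    | empty => intro _; simp [uI_empty]
    | @insert i T hiT ih =>
      intro hSI
      have hiI : i ∈ I := hSI (Finset.mem_insert_self i T)
      have hTI : T ⊆ I := fun x hx => hSI (Finset.mem_insert_of_mem hx)
      have hA := A T hTI i hiI hiT
      have E3 : p + uI d (insert i T) j = p + uI d T j + uu d i j := by
        rw [uI_insert d T i j hiT]; abel
      have pose : 0 < V (p + uu d i j) := by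
        rw [← uI_singleton d i j]
        exact hpos _ (memP {i} (by simpa using hiI))
      rw [E3, Finset.card_insert_of_notMem hiT, Finset.prod_insert hiT]
      have hc : (T.card + 1).choose 2 = T.card + T.card.choose 2 := by
        rw [Nat.choose_succ_succ, Nat.choose_one_right]
      rw [hc]
      calc V p ^ (T.card + 1) * V (p + uI d T j + uu d i j)
          = V p ^ T.card * (V p * V (p + uI d T j + uu d i j)) := by ring
        _ ≤ V p ^ T.card * (2 ^ T.card * (V (p + uI d T j) * V (p + uu d i j))) :=
            mul_le_mul_of_nonneg_left hA (by positivity)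
        _ = (2 ^ T.card * V (p + uu d i j)) * (V p ^ T.card * V (p + uI d T j)) := by ring
        _ ≤ (2 ^ T.card * V (p + uu d i j)) *
              (2 ^ (T.card.choose 2) * (V p * ∏ m ∈ T, V (p + uu d m j))) :=
            mul_le_mul_of_nonneg_left (ih hTI) (by positivity)
        _ = 2 ^ (T.card + T.card.choose 2) *
              (V p * (V (p + uu d i j) * ∏ m ∈ T, V (p + uu d m j))) := by
            rw [pow_add]; ring
  -- Lemma B' (backward product)
  have B' : ∀ S : Finset (Fin d), S ⊆ I →
      V p ^ S.card * V (p - uI d S j) ≤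
        2 ^ (S.card.choose 2) * (V p * ∏ i ∈ S, V (p - uu d i j)) := by
    intro S
    induction S using Finset.induction_on with
    | empty => intro _; simp [uI_empty]
    | @insert i T hiT ih =>
      intro hSI
      have hiI : i ∈ I := hSI (Finset.mem_insert_self i T)
      have hTI : T ⊆ I := fun x hx => hSI (Finset.mem_insert_of_mem hx)
      have hA := A' T hTI i hiI hiT
      have E3 : p - uI d (insert i T) j = p - uI d T j - uu d i j := by
        rw [uI_insert d T i j hiT]; abel
      have pose : 0 < V (p - uu d i j) := by
        rw [← uI_singleton d i j]
        exact hpos _ (memM {i} (by simpa using hiI))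
      rw [E3, Finset.card_insert_of_notMem hiT, Finset.prod_insert hiT]
      have hc : (T.card + 1).choose 2 = T.card + T.card.choose 2 := by
        rw [Nat.choose_succ_succ, Nat.choose_one_right]
      rw [hc]
      calc V p ^ (T.card + 1) * V (p - uI d T j - uu d i j)
          = V p ^ T.card * (V p * V (p - uI d T j - uu d i j)) := by ring
        _ ≤ V p ^ T.card * (2 ^ T.card * (V (p - uI d T j) * V (p - uu d i j))) :=
            mul_le_mul_of_nonneg_left hA (by positivity)
        _ = (2 ^ T.card * V (p - uu d i j)) * (V p ^ T.card * V (p - uI d T j)) := by ring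
        _ ≤ (2 ^ T.card * V (p - uu d i j)) *
              (2 ^ (T.card.choose 2) * (V p * ∏ m ∈ T, V (p - uu d m j))) :=
            mul_le_mul_of_nonneg_left (ih hTI) (by positivity)
        _ = 2 ^ (T.card + T.card.choose 2) *
              (V p * (V (p - uu d i j) * ∏ m ∈ T, V (p - uu d m j))) := by
            rw [pow_add]; ring
  -- finish
  have BI := B I (le_refl I)
  have BI' := B' I (le_refl I)
  set k := I.card with hk
  set C := k.choose 2 with hC
  have posVP : 0 < V (p + uI d I j) := hpos _ hp1
  have posVM : 0 < V (p - uI d I j) := hpos _ hp2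
  have prodP_pos : ∀ i ∈ I, 0 < V (p + uu d i j) := by
    intro i hiI
    rw [← uI_singleton d i j]
    exact hpos _ (memP {i} (by simpa using hiI))
  have prodM_pos : ∀ i ∈ I, 0 < V (p - uu d i j) := by
    intro i hiI
    rw [← uI_singleton d i j]
    exact hpos _ (memM {i} (by simpa using hiI))
  have prodbound : ∏ i ∈ I, (V (p + uu d i j) * V (p - uu d i j)) ≤ ∏ i ∈ I, (V p) ^ 2 := by
    apply Finset.prod_le_prod
    · intro i hiI
      exact mul_nonneg (prodP_pos i hiI).le (prodM_pos i hiI).le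
    · intro i hiI
      have hij : i ≠ j := fun h => hjI (h ▸ hiI)
      have m1 : inDelta d (p + uu d i j) := by
        rw [← uI_singleton d i j]; exact memP {i} (by simpa using hiI)
      have m2 : inDelta d (p - uu d i j) := by
        rw [← uI_singleton d i j]; exact memM {i} (by simpa using hiI)
      exact hAF p i j hij hpd m1 m2
  have h1 : (V p ^ k * V (p + uI d I j)) * (V p ^ k * V (p - uI d I j)) ≤
      (2 ^ C * (V p * ∏ i ∈ I, V (p + uu d i j))) *
        (2 ^ C * (V p * ∏ i ∈ I, V (p - uu d i j))) := by
    apply mul_le_mul BI BI' (by positivity)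
    have : 0 < ∏ i ∈ I, V (p + uu d i j) := Finset.prod_pos prodP_pos
    positivity
  have hfin : (V (p + uI d I j) * V (p - uI d I j)) * (V p ^ k * V p ^ k) ≤
      ((2 ^ C * V p) ^ 2) * (V p ^ k * V p ^ k) := by
    calc (V (p + uI d I j) * V (p - uI d I j)) * (V p ^ k * V p ^ k)
        = (V p ^ k * V (p + uI d I j)) * (V p ^ k * V (p - uI d I j)) := by ring
      _ ≤ (2 ^ C * (V p * ∏ i ∈ I, V (p + uu d i j))) *
            (2 ^ C * (V p * ∏ i ∈ I, V (p - uu d i j))) := h1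
      _ = (2 ^ C * V p) ^ 2 *
            ((∏ i ∈ I, V (p + uu d i j)) * ∏ i ∈ I, V (p - uu d i j)) := by ring
      _ = (2 ^ C * V p) ^ 2 * ∏ i ∈ I, (V (p + uu d i j) * V (p - uu d i j)) := by
          rw [← Finset.prod_mul_distrib]
      _ ≤ (2 ^ C * V p) ^ 2 * ∏ i ∈ I, (V p) ^ 2 :=
          mul_le_mul_of_nonneg_left prodbound (by positivity)
      _ = ((2 ^ C * V p) ^ 2) * (V p ^ k * V p ^ k) := by
          rw [Finset.prod_const, ← hk]; ring
  have main : V (p + uI d I j) * V (p - uI d I j) ≤ (2 ^ C * V p) ^ 2 :=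
    le_of_mul_le_mul_right hfin (by positivity)
  calc Real.sqrt (V (p + uI d I j)) * Real.sqrt (V (p - uI d I j))
      = Real.sqrt (V (p + uI d I j) * V (p - uI d I j)) :=
        (Real.sqrt_mul posVP.le _).symm
    _ ≤ Real.sqrt ((2 ^ C * V p) ^ 2) := Real.sqrt_le_sqrt main
    _ = 2 ^ C * V p := Real.sqrt_sq (by positivity)
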